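/- arXiv:2304.12955 — 2 statements merged into one kernel-verified Lean document; each statement's English description precedes it below -/
import Mathlib

section
/- For any finite list of context-free languages L₁, …, L_k over a common alphabet Σ, there exist a single restricted PDA P over Σ and subsets G₁, …, G_k of its states such that for every string w ∈ Σ* and every j ∈ {1, …, k}: w ∈ L_j if and only if some run of P scanning w ends in a state of G_j with ⊥ as the top stack symbol. Consequently, w ∈ L₁ ∩ ⋯ ∩ L_k if and only if for every j ∈ {1, …, k} some run of P scanning w ends in a state of G_j with ⊥ on top of the stack. -/
/-!
After binarizing a grammar, the first letter `a` of a nonempty word generated by `A` comes from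
a terminal rule `D → a` at the bottom of a left spine from `A` to `D`, and the rest of the word
is generated along that spine. Hence the words of `A`, and likewise those of a left-corner
quotient `{u | A ⇒* B u}`, split as `a` followed by words of at most two such quotients: these
ε-free languages form a finite family in quadratic Greibach form, whose leftmost derivations a
restricted PDA can simulate. Running the simulations for `L₁, …, L_k` behind a common start
state, `G_j` is the final state of the `j`-th simulation, plus the start state when `ε ∈ L_j`.
-/

/-- A *restricted PDA*: a bottom-marked nondeterministic pushdown automaton each of whose
transitions scans exactly one input symbol and either pushes a single symbol on top of the
current top symbol (`q, a, x → r, xy`), replaces the top symbol (`q, a, x → r, y`), or pops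
the top symbol (`q, a, x → r, ε`).  Stacks are lists whose head is the top of the stack. -/
structure RestrictedPDA (Q T S : Type) where
  /-- The start state. -/
  start : Q
  /-- The designated bottom symbol `⊥`. -/
  bot : S
  /-- `pushTrans q a x r y` is the transition `q, a, x → r, xy`. -/
  pushTrans : Q → T → S → Q → S → Prop
  /-- `replTrans q a x r y` is the transition `q, a, x → r, y`. -/
  replTrans : Q → T → S → Q → S → Prop
  /-- `popTrans q a x r` is the transition `q, a, x → r, ε`. -/
  popTrans : Q → T → S → Q → Prop
  /-- The set of accept states. -/
  accept : Set Q

/-- A single step of a restricted PDA, scanning one input symbol. -/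
inductive RestrictedPDA.Step {Q T S : Type} (M : RestrictedPDA Q T S) :
    Q × List S → T → Q × List S → Prop
  | push {q : Q} {a : T} {x : S} {r : Q} {y : S} {β : List S} :
      M.pushTrans q a x r y → RestrictedPDA.Step M (q, x :: β) a (r, y :: x :: β)
  | repl {q : Q} {a : T} {x : S} {r : Q} {y : S} {β : List S} :
      M.replTrans q a x r y → RestrictedPDA.Step M (q, x :: β) a (r, y :: β)
  | pop {q : Q} {a : T} {x : S} {r : Q} {β : List S} :
      M.popTrans q a x r → RestrictedPDA.Step M (q, x :: β) a (r, β)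

/-- `M.Scans c w c'` means that `M` can go from configuration `c` to configuration `c'` by a
run scanning exactly the string `w` (one input symbol per step). -/
inductive RestrictedPDA.Scans {Q T S : Type} (M : RestrictedPDA Q T S) :
    Q × List S → List T → Q × List S → Prop
  | refl (c : Q × List S) : RestrictedPDA.Scans M c [] c
  | step {c c' c'' : Q × List S} {a : T} {w : List T} :
      M.Step c a c' → RestrictedPDA.Scans M c' w c'' → RestrictedPDA.Scans M c (a :: w) c''

/-- The language of a restricted PDA: it accepts `w` iff some run starting from the start
state with stack containing only `⊥` and scanning `w` ends in an accept state with `⊥` as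
the top stack symbol. -/
def RestrictedPDA.language {Q T S : Type} (M : RestrictedPDA Q T S) : Language T :=
  {w | ∃ r ∈ M.accept, ∃ β : List S, M.Scans (M.start, [M.bot]) w (r, M.bot :: β)}

structure BinaryGrammar (T N : Type) where
  start : N
  nullRule : N → Prop
  termRule : N → T → Prop
  unitRule : N → N → Prop
  binRule : N → N → N → Prop

namespace BinaryGrammar

variable {T N : Type} (G : BinaryGrammar T N)

inductive Generates : N → List T → Prop
  | null {A : N} : G.nullRule A → Generates A []
  | term {A : N} {a : T} : G.termRule A a → Generates A [a]
  | unit {A B : N} {w : List T} : G.unitRule A B → Generates B w → Generates A w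
  | bin {A B C : N} {u v : List T} :
      G.binRule A B C → Generates B u → Generates C v → Generates A (u ++ v)

def language : Language T := {w | G.Generates G.start w}

def restrict (S : Set N) (hS : G.start ∈ S) : BinaryGrammar T S where
  start := ⟨G.start, hS⟩
  nullRule A := G.nullRule A
  termRule A a := G.termRule A a
  unitRule A B := G.unitRule A B
  binRule A B C := G.binRule A B C

variable {G}

lemma Generates.of_restrict {S : Set N} {hS : G.start ∈ S} {A : S} {w : List T}
    (h : (G.restrict S hS).Generates A w) : G.Generates A w := by
  induction h with
  | null h => exact .null h
  | term h => exact .term h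
  | unit h _ ih => exact .unit h ih
  | bin h _ _ ihB ihC => exact .bin h ihB ihC

lemma Generates.restrict {S : Set N} (hS : G.start ∈ S)
    (hunit : ∀ A B, A ∈ S → G.unitRule A B → B ∈ S)
    (hbin : ∀ A B C, A ∈ S → G.binRule A B C → B ∈ S ∧ C ∈ S)
    {A : N} {w : List T} (h : G.Generates A w) (hA : A ∈ S) :
    (G.restrict S hS).Generates ⟨A, hA⟩ w := by
  induction h with
  | null h => exact .null h
  | term h => exact .term h
  | @unit A B w h _ ih =>
      exact .unit (G := G.restrict S hS) (B := ⟨B, hunit A B hA h⟩) h (ih _)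
  | @bin A B C u v h _ _ ihB ihC =>
      have hBC := hbin A B C hA h
      exact .bin (G := G.restrict S hS) (B := ⟨B, hBC.1⟩) (C := ⟨C, hBC.2⟩) h
        (ihB _) (ihC _)

theorem language_restrict {S : Set N} (hS : G.start ∈ S)
    (hunit : ∀ A B, A ∈ S → G.unitRule A B → B ∈ S)
    (hbin : ∀ A B C, A ∈ S → G.binRule A B C → B ∈ S ∧ C ∈ S) :
    (G.restrict S hS).language = G.language :=
  Set.ext fun _ => ⟨Generates.of_restrict, fun h => h.restrict hS hunit hbin _⟩

end BinaryGrammar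

namespace ContextFreeGrammar

variable {T : Type} (g : ContextFreeGrammar T)

/-- The nonterminals are strings of symbols; a rule `X :: s → [X] s` splits off the first
symbol. -/
def toBinaryGrammar : BinaryGrammar T (List (Symbol T g.NT)) where
  start := [.nonterminal g.initial]
  nullRule s := s = []
  termRule s a := s = [.terminal a]
  unitRule s t := ∃ r ∈ g.rules, s = [.nonterminal r.input] ∧ t = r.output
  binRule s t u := ∃ X, s = X :: u ∧ t = [X]

open Classical in
noncomputable def binaryNonterminals : Finset (List (Symbol T g.NT)) :=
  insert [] (insert [.nonterminal g.initial] (g.rules.biUnion fun r =>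
    insert [.nonterminal r.input] (r.output.tails.toFinset ∪ r.output.toFinset.image ([·]))))

variable {g}

lemma derives_of_generates {s : List (Symbol T g.NT)} {w : List T}
    (h : g.toBinaryGrammar.Generates s w) : g.Derives s (w.map .terminal) := by
  induction h with
  | null h => cases h; rfl
  | term h => cases h; rfl
  | unit h _ ih =>
      obtain ⟨r, hr, rfl, rfl⟩ := h
      exact (Produces.single ⟨r, hr, .input_output⟩).trans ih
  | bin h _ _ ihB ihC =>
      obtain ⟨X, rfl, rfl⟩ := h
      rw [List.map_append]
      exact (ihB.append_right _).trans (ihC.append_left _)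

lemma generates_nil_iff {w : List T} : g.toBinaryGrammar.Generates [] w ↔ w = [] := by
  refine ⟨fun h => ?_, fun h => h ▸ .null rfl⟩
  cases h with
  | null => rfl
  | term h | unit h | bin h => simp [toBinaryGrammar] at h

lemma generates_cons_iff {X : Symbol T g.NT} {s : List (Symbol T g.NT)} {w : List T} :
    g.toBinaryGrammar.Generates (X :: s) w ↔
      ∃ u v, w = u ++ v ∧ g.toBinaryGrammar.Generates [X] u ∧
        g.toBinaryGrammar.Generates s v := by
  refine ⟨fun h => ?_, fun ⟨u, v, hw, hu, hv⟩ => hw ▸ .bin ⟨X, rfl, rfl⟩ hu hv⟩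
  rcases eq_or_ne s [] with rfl | hs
  · exact ⟨w, [], by simp, h, .null rfl⟩
  cases h with
  | null h => cases h
  | term h => cases h; exact absurd rfl hs
  | unit h => obtain ⟨r, -, h, -⟩ := h; cases h; exact absurd rfl hs
  | bin h hu hv => obtain ⟨Y, h, rfl⟩ := h; cases h; exact ⟨_, _, rfl, hu, hv⟩

lemma generates_append_iff {s₁ s₂ : List (Symbol T g.NT)} {w : List T} :
    g.toBinaryGrammar.Generates (s₁ ++ s₂) w ↔
      ∃ w₁ w₂, w = w₁ ++ w₂ ∧ g.toBinaryGrammar.Generates s₁ w₁ ∧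
        g.toBinaryGrammar.Generates s₂ w₂ := by
  induction s₁ generalizing w with
  | nil => simp [generates_nil_iff]
  | cons X s₁ ih =>
      simp only [List.cons_append, generates_cons_iff (s := s₁ ++ s₂),
        generates_cons_iff (s := s₁), ih]
      constructor
      · rintro ⟨u, _, rfl, hu, w₁, w₂, rfl, h₁, h₂⟩
        exact ⟨u ++ w₁, w₂, by simp, ⟨u, w₁, rfl, hu, h₁⟩, h₂⟩
      · rintro ⟨_, w₂, rfl, ⟨u, w₁, rfl, hu, h₁⟩, h₂⟩
        exact ⟨u, w₁ ++ w₂, by simp, hu, w₁, w₂, rfl, h₁, h₂⟩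

lemma generates_map_terminal (w : List T) : g.toBinaryGrammar.Generates (w.map .terminal) w := by
  induction w with
  | nil => exact .null rfl
  | cons a w ih => exact generates_cons_iff.2 ⟨[a], w, rfl, .term rfl, ih⟩

lemma generates_of_derives {s : List (Symbol T g.NT)} {w : List T}
    (h : g.Derives s (w.map .terminal)) : g.toBinaryGrammar.Generates s w := by
  induction h using Relation.ReflTransGen.head_induction_on with
  | refl => exact generates_map_terminal w
  | head hs _ ih =>
      obtain ⟨r, hr, hrw⟩ := hs
      obtain ⟨p, q, rfl, rfl⟩ := hrw.exists_parts
      obtain ⟨_, w₂, rfl, h₁, hq⟩ := generates_append_iff.1 ih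
      obtain ⟨w₀, w₁, rfl, hp, hout⟩ := generates_append_iff.1 h₁
      have hinput : g.toBinaryGrammar.Generates [.nonterminal r.input] w₁ :=
        .unit ⟨r, hr, rfl, rfl⟩ hout
      exact generates_append_iff.2
        ⟨_, _, rfl, generates_append_iff.2 ⟨_, _, rfl, hp, hinput⟩, hq⟩

theorem language_toBinaryGrammar : g.toBinaryGrammar.language = g.language :=
  Set.ext fun _ => ⟨derives_of_generates, generates_of_derives⟩

lemma mem_binaryNonterminals {s : List (Symbol T g.NT)} :
    s ∈ g.binaryNonterminals ↔ s = [] ∨ s = [.nonterminal g.initial] ∨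
      ∃ r ∈ g.rules,
        s = [.nonterminal r.input] ∨ s <:+ r.output ∨ ∃ X ∈ r.output, [X] = s := by
  simp [binaryNonterminals]

lemma unitRule_mem_binaryNonterminals {s t : List (Symbol T g.NT)}
    (h : g.toBinaryGrammar.unitRule s t) : t ∈ g.binaryNonterminals := by
  obtain ⟨r, hr, -, rfl⟩ := h
  exact mem_binaryNonterminals.2 (.inr (.inr ⟨r, hr, .inr (.inl (List.suffix_refl _))⟩))

lemma binRule_mem_binaryNonterminals {s t u : List (Symbol T g.NT)}
    (hs : s ∈ g.binaryNonterminals) (h : g.toBinaryGrammar.binRule s t u) :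
    t ∈ g.binaryNonterminals ∧ u ∈ g.binaryNonterminals := by
  obtain ⟨X, rfl, rfl⟩ := h
  rcases eq_or_ne u [] with rfl | hu
  · exact ⟨hs, mem_binaryNonterminals.2 (.inl rfl)⟩
  obtain ⟨r, hr, hsuf⟩ : ∃ r ∈ g.rules, X :: u <:+ r.output := by
    rcases mem_binaryNonterminals.1 hs with h | h | ⟨r, hr, h | h | ⟨Y, -, h⟩⟩ <;>
      first | exact ⟨r, hr, h⟩ | simp_all
  refine ⟨mem_binaryNonterminals.2 (.inr (.inr ⟨r, hr, .inr (.inr ⟨X, ?_, rfl⟩)⟩)),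
    mem_binaryNonterminals.2 (.inr (.inr ⟨r, hr, .inr (.inl ?_)⟩))⟩
  · exact hsuf.subset List.mem_cons_self
  · exact (List.suffix_cons X u).trans hsuf

theorem _root_.Language.IsContextFree.exists_binaryGrammar {L : Language T}
    (hL : L.IsContextFree) : ∃ (N : Type) (_ : Finite N) (G : BinaryGrammar T N),
      G.language = L := by
  obtain ⟨g, rfl⟩ := hL
  have hstart : g.toBinaryGrammar.start ∈ (g.binaryNonterminals : Set _) :=
    mem_binaryNonterminals.2 (.inr (.inl rfl))
  refine ⟨_, inferInstance, g.toBinaryGrammar.restrict _ hstart, ?_⟩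
  rw [BinaryGrammar.language_restrict hstart (fun _ _ _ => unitRule_mem_binaryNonterminals)
    (fun _ _ _ => binRule_mem_binaryNonterminals), language_toBinaryGrammar]

end ContextFreeGrammar

section GreibachFamily

variable {T C : Type}

def Expands (F : C → Language T) (c : C) (a : T) (γ : List C) : Prop :=
  γ.length ≤ 2 ∧ ∀ v ∈ (γ.map F).prod, a :: v ∈ F c

/-- The languages `F c` behave like those of the nonterminals of an ε-free grammar in Greibach
normal form with at most two nonterminals per rule, `c → a γ` being a rule when
`Expands F c a γ`. -/
structure IsGreibachFamily (F : C → Language T) : Prop where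
  nil_notMem (c : C) : [] ∉ F c
  exists_expands (c : C) (a : T) (w : List T) :
    a :: w ∈ F c → ∃ γ, Expands F c a γ ∧ w ∈ (γ.map F).prod

variable {F : C → Language T}

lemma Expands.cons_mem_prod {c : C} {a : T} {γ δ : List C} {w : List T} (h : Expands F c a γ)
    (hw : w ∈ ((γ ++ δ).map F).prod) : a :: w ∈ ((c :: δ).map F).prod := by
  rw [List.map_append, List.prod_append, Language.mem_mul] at hw
  obtain ⟨u, hu, v, hv, rfl⟩ := hw
  rw [List.map_cons, List.prod_cons]
  exact Language.append_mem_mul (h.2 u hu) hv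

lemma Expands.tail_eq {c : C} {a : T} {γ : List C} (h : Expands F c a γ) :
    γ.tail = [] ∨ ∃ e, γ.tail = [e] := by
  rcases γ with _ | ⟨_, _ | ⟨e, _ | ⟨_, _⟩⟩⟩
  · exact .inl rfl
  · exact .inl rfl
  · exact .inr ⟨e, rfl⟩
  · exact absurd h.1 (by simp)

namespace IsGreibachFamily

lemma eq_nil_of_nil_mem_prod (hF : IsGreibachFamily F) {γ : List C}
    (h : [] ∈ (γ.map F).prod) : γ = [] := by
  cases γ with
  | nil => rfl
  | cons c δ =>
      rw [List.map_cons, List.prod_cons, Language.mem_mul] at h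
      obtain ⟨u, hu, v, -, huv⟩ := h
      exact absurd (List.append_eq_nil_iff.1 huv).1 (fun h => hF.nil_notMem c (h ▸ hu))

lemma exists_expands_of_cons_mem_prod (hF : IsGreibachFamily F) {γ : List C} {a : T}
    {w : List T} (h : a :: w ∈ (γ.map F).prod) :
    ∃ c δ γ', γ = c :: δ ∧ Expands F c a γ' ∧ w ∈ ((γ' ++ δ).map F).prod := by
  cases γ with
  | nil => simp [Language.mem_one] at h
  | cons c δ =>
      rw [List.map_cons, List.prod_cons, Language.mem_mul] at h
      obtain ⟨_ | ⟨b, u⟩, hu, v, hv, huv⟩ := h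
      · exact absurd hu (hF.nil_notMem c)
      obtain ⟨rfl, rfl⟩ := List.cons_eq_cons.1 huv
      obtain ⟨γ', hexp, hγ'⟩ := hF.exists_expands c b u hu
      refine ⟨c, δ, γ', rfl, hexp, ?_⟩
      rw [List.map_append, List.prod_append]
      exact Language.append_mem_mul hγ' hv

end IsGreibachFamily

end GreibachFamily

namespace BinaryGrammar

variable {T N : Type} (G : BinaryGrammar T N)

/-- `G.LeftCorner A B v`: a rule for `A` has `B` as a child preceded only by children generating
`ε`, and the children after `B` generate `v`. -/
inductive LeftCorner : N → N → List T → Prop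
  | unit {A B : N} : G.unitRule A B → LeftCorner A B []
  | left {A B C : N} {v : List T} : G.binRule A B C → G.Generates C v → LeftCorner A B v
  | right {A B C : N} : G.binRule A C B → G.Generates C [] → LeftCorner A B []

/-- `G.Spine A B u`: a chain of left corners leads from `A` down to `B`, so `A` derives `B u`. -/
inductive Spine : N → N → List T → Prop
  | refl (A : N) : Spine A A []
  | tail {A B C : N} {u v : List T} : Spine A B u → G.LeftCorner B C v → Spine A C (v ++ u)

variable {G} {A B C D : N} {a : T} {u v w x : List T}

lemma LeftCorner.generates (h : G.LeftCorner A B v) (hB : G.Generates B x) :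
    G.Generates A (x ++ v) := by
  cases h with
  | unit h => simpa using Generates.unit h hB
  | left h hC => exact .bin h hB hC
  | right h hC => simpa using Generates.bin h hC hB

lemma Spine.generates (h : G.Spine A B u) (hB : G.Generates B x) : G.Generates A (x ++ u) := by
  induction h generalizing x with
  | refl => simpa using hB
  | tail _ hlc ih => simpa using ih (hlc.generates hB)

lemma Spine.trans (h₁ : G.Spine A B u) (h₂ : G.Spine B C v) : G.Spine A C (v ++ u) := by
  induction h₂ with
  | refl => simpa using h₁
  | tail _ hlc ih => simpa using ih.tail hlc

lemma LeftCorner.spine (h : G.LeftCorner A B v) : G.Spine A B v := by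
  simpa using (Spine.refl A).tail h

lemma generates_cons_of_spine (hD : G.termRule D a) (h : G.Spine A D w) :
    G.Generates A (a :: w) :=
  h.generates (.term hD)

lemma exists_spine_of_generates_cons (h : G.Generates A (a :: w)) :
    ∃ D, G.termRule D a ∧ G.Spine A D w := by
  generalize hw : a :: w = w' at h
  induction h generalizing w with
  | null => cases hw
  | term h => cases hw; exact ⟨_, h, .refl _⟩
  | unit h _ ih =>
      obtain ⟨D, hD, hs⟩ := ih hw
      exact ⟨D, hD, by simpa using (LeftCorner.unit h).spine.trans hs⟩
  | @bin A B C u v h hB hC ihB ihC =>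
      cases u with
      | nil =>
          obtain ⟨D, hD, hs⟩ := ihC hw
          exact ⟨D, hD, by simpa using (LeftCorner.right h hB).spine.trans hs⟩
      | cons b u =>
          obtain ⟨rfl, rfl⟩ := List.cons_eq_cons.1 hw
          obtain ⟨D, hD, hs⟩ := ihB rfl
          exact ⟨D, hD, (LeftCorner.left h hC).spine.trans hs⟩

/-- The first letter of a word along a spine comes from the deepest left corner whose remaining
children do not generate `ε`. -/
lemma Spine.exists_of_cons (h : G.Spine A B (a :: w)) :
    ∃ A' B' C v u, G.Spine A A' u ∧ G.binRule A' B' C ∧ G.Generates C (a :: v) ∧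
      G.Spine B' B [] ∧ w = v ++ u := by
  generalize hw : a :: w = w' at h
  induction h generalizing w with
  | refl => cases hw
  | @tail B₁ C₁ u v hs hlc ih =>
      cases v with
      | nil =>
          obtain ⟨A', B', C, v, u, hA', hbin, hC, hB', rfl⟩ := ih hw
          exact ⟨A', B', C, v, u, hA', hbin, hC, by simpa using hB'.tail hlc, rfl⟩
      | cons b v =>
          obtain ⟨rfl, rfl⟩ := List.cons_eq_cons.1 hw
          cases hlc with
          | left hbin hC => exact ⟨B₁, C₁, _, v, u, hs, hbin, hC, .refl _, rfl⟩

variable (G)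

/-- The cell `inr (A, B)` stands for `A` with its left corner `B` removed. -/
def cellLanguage : N ⊕ N × N → Language T
  | .inl A => {w | G.Generates A w ∧ w ≠ []}
  | .inr (A, B) => {w | G.Spine A B w ∧ w ≠ []}

/-- Cells are ε-free, so an empty word needs no cell. -/
def spineCells (A B : N) (u : List T) : List (N ⊕ N × N) :=
  if u = [] then [] else [.inr (A, B)]

variable {G}

lemma length_spineCells_le : (spineCells A B u).length ≤ 1 := by
  unfold spineCells; split_ifs <;> simp

lemma mem_prod_spineCells (h : G.Spine A B u) :
    u ∈ ((spineCells A B u).map G.cellLanguage).prod := by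
  unfold spineCells
  split_ifs with hu
  · simp [hu, Language.mem_one]
  · simp only [List.map_cons, List.map_nil, List.prod_cons, List.prod_nil, mul_one]
    exact ⟨h, hu⟩

lemma Spine.of_mem_prod_spineCells (h : G.Spine A B u)
    (hv : v ∈ ((spineCells A B u).map G.cellLanguage).prod) : G.Spine A B v := by
  unfold spineCells at hv
  split_ifs at hv with hu
  · rw [List.map_nil, List.prod_nil, Language.mem_one] at hv
    exact hv ▸ hu ▸ h
  · simp only [List.map_cons, List.map_nil, List.prod_cons, List.prod_nil, mul_one] at hv
    exact hv.1

lemma expands_inl (hD : G.termRule D a) (h : G.Spine A D w) :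
    Expands G.cellLanguage (.inl A) a (spineCells A D w) :=
  ⟨length_spineCells_le.trans (by norm_num), fun _ hv =>
    ⟨generates_cons_of_spine hD (h.of_mem_prod_spineCells hv), List.cons_ne_nil _ _⟩⟩

lemma expands_inr {A' B' : N} (hA : G.Spine A A' u) (hbin : G.binRule A' B' C)
    (hD : G.termRule D a) (hC : G.Spine C D v) (hB : G.Spine B' B []) :
    Expands G.cellLanguage (.inr (A, B)) a (spineCells C D v ++ spineCells A A' u) := by
  refine ⟨?_, fun x hx => ⟨?_, List.cons_ne_nil _ _⟩⟩
  · rw [List.length_append]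
    exact Nat.add_le_add length_spineCells_le length_spineCells_le
  rw [List.map_append, List.prod_append, Language.mem_mul] at hx
  obtain ⟨x₁, hx₁, x₂, hx₂, rfl⟩ := hx
  have hcorner : G.LeftCorner A' B' (a :: x₁) :=
    .left hbin (generates_cons_of_spine hD (hC.of_mem_prod_spineCells hx₁))
  simpa using ((hA.of_mem_prod_spineCells hx₂).tail hcorner).trans hB

theorem isGreibachFamily_cellLanguage : IsGreibachFamily G.cellLanguage where
  nil_notMem
    | .inl _, h => h.2 rfl
    | .inr _, h => h.2 rfl
  exists_expands
    | .inl A, a, w, ⟨h, _⟩ => by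
        obtain ⟨D, hD, hs⟩ := exists_spine_of_generates_cons h
        exact ⟨_, expands_inl hD hs, mem_prod_spineCells hs⟩
    | .inr (A, B), a, _, ⟨h, _⟩ => by
        obtain ⟨A', B', C, v, u, hA, hbin, hC, hB, rfl⟩ := h.exists_of_cons
        obtain ⟨D, hD, hCD⟩ := exists_spine_of_generates_cons hC
        refine ⟨_, expands_inr hA hbin hD hCD hB, ?_⟩
        rw [List.map_append, List.prod_append]
        exact Language.append_mem_mul (mem_prod_spineCells hCD) (mem_prod_spineCells hA)

end BinaryGrammar

theorem Language.IsContextFree.exists_isGreibachFamily {T : Type} {L : Language T}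
    (hL : L.IsContextFree) : ∃ (C : Type) (_ : Finite C) (F : C → Language T) (c₀ : C),
      IsGreibachFamily F ∧ ∀ w, w ∈ F c₀ ↔ w ∈ L ∧ w ≠ [] := by
  obtain ⟨N, _, G, rfl⟩ := hL.exists_binaryGrammar
  exact ⟨_, inferInstance, G.cellLanguage, .inl G.start,
    BinaryGrammar.isGreibachFamily_cellLanguage, fun _ => Iff.rfl⟩

namespace GreibachPDA

variable {T : Type} {k : ℕ} {C : Fin k → Type}

abbrev State (C : Fin k → Type) : Type := Option (Σ j, Option (C j))

abbrev StackSymbol (C : Fin k → Type) : Type := Option (Σ j, C j)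

abbrev stackCell (j : Fin k) (c : C j) : StackSymbol C := some ⟨j, c⟩

def index (q : State C) : Option (Fin k) := q.map Sigma.fst

variable (F : ∀ j, C j → Language T) (c₀ : ∀ j, C j)

/-- The start state acts as if it cached `c₀ j`, for every `j`. -/
inductive Caches : State C → (j : Fin k) → Option (C j) → Prop
  | start (j : Fin k) : Caches none j (some (c₀ j))
  | state (j : Fin k) (co : Option (C j)) : Caches (some ⟨j, co⟩) j co

inductive PushTrans : State C → T → StackSymbol C → State C → StackSymbol C → Prop
  | cached {q : State C} {j : Fin k} {c e : C j} {a : T} {γ : List (C j)} {x : StackSymbol C} :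
      Caches c₀ q j (some c) → Expands (F j) c a γ → γ.tail = [e] →
      PushTrans q a x (some ⟨j, γ.head?⟩) (stackCell j e)

inductive ReplTrans : State C → T → StackSymbol C → State C → StackSymbol C → Prop
  | cached {q : State C} {j : Fin k} {c : C j} {a : T} {γ : List (C j)} {x : StackSymbol C} :
      Caches c₀ q j (some c) → Expands (F j) c a γ → γ.tail = [] →
      ReplTrans q a x (some ⟨j, γ.head?⟩) x
  | top {j : Fin k} {c e : C j} {a : T} {γ : List (C j)} :
      Expands (F j) c a γ → γ.tail = [e] →
      ReplTrans (some ⟨j, none⟩) a (stackCell j c) (some ⟨j, γ.head?⟩) (stackCell j e)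

inductive PopTrans : State C → T → StackSymbol C → State C → Prop
  | top {j : Fin k} {c : C j} {a : T} {γ : List (C j)} :
      Expands (F j) c a γ → γ.tail = [] →
      PopTrans (some ⟨j, none⟩) a (stackCell j c) (some ⟨j, γ.head?⟩)

/-- After choosing a component `j`, the machine runs through a leftmost derivation of the
Greibach family `F j` from `c₀ j`. The pending cells are the cell cached in the state followed
by the stack above `⊥`: a rule `c → a d e` replaces one cell by two, which a restricted PDA
can only do by keeping `d` in its state. -/
def machine : RestrictedPDA (State C) T (StackSymbol C) where
  start := none
  bot := none
  pushTrans := PushTrans F c₀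
  replTrans := ReplTrans F c₀
  popTrans := PopTrans F
  accept := ∅

def Represents (j : Fin k) (cfg : State C × List (StackSymbol C)) (γ : List (C j)) : Prop :=
  ∃ co δ, Caches c₀ cfg.1 j co ∧ cfg.2 = δ.map (stackCell j) ++ [none] ∧
    γ = co.toList ++ δ

variable {F c₀} {j : Fin k} {a : T}

lemma Caches.unique {q : State C} {co co' : Option (C j)}
    (h : Caches c₀ q j co) (h' : Caches c₀ q j co') : co = co' := by
  cases h <;> cases h' <;> rfl

lemma Caches.eq_of_index_eq {q : State C} {co : Option (C j)} {i : Fin k}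
    (hq : Caches c₀ q j co) (hi : index q = some i) : i = j := by
  cases hq with
  | start => cases hi
  | state => exact (Option.some.inj hi).symm

variable (j) in
lemma represents_start : Represents c₀ j (none, [none]) [c₀ j] :=
  ⟨_, [], .start j, rfl, rfl⟩

lemma represents_expansion {γ δ : List (C j)} {σ : List (StackSymbol C)}
    (hσ : σ = (γ.tail ++ δ).map (stackCell j) ++ [none]) :
    Represents c₀ j (some ⟨j, γ.head?⟩, σ) (γ ++ δ) :=
  ⟨_, _, .state _ _, hσ, by cases γ <;> rfl⟩

lemma Represents.eq_cons_of_caches {q : State C} {σ : List (StackSymbol C)}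
    {γ : List (C j)} {c : C j} (h : Represents c₀ j (q, σ) γ) (hq : Caches c₀ q j (some c)) :
    ∃ δ, γ = c :: δ ∧ σ = δ.map (stackCell j) ++ [none] := by
  obtain ⟨co, δ, hco, hσ, rfl⟩ := h
  obtain rfl := hco.unique hq
  exact ⟨δ, rfl, hσ⟩

lemma Represents.eq_cons_of_top {c : C j} {β : List (StackSymbol C)}
    {γ : List (C j)} (h : Represents c₀ j (some ⟨j, none⟩, stackCell j c :: β) γ) :
    ∃ δ, γ = c :: δ ∧ β = δ.map (stackCell j) ++ [none] := by
  obtain ⟨co, δ, hco, hσ, rfl⟩ := h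
  obtain rfl := hco.unique (.state j none)
  rcases δ with _ | ⟨d, δ⟩
  · simp at hσ
  · simp only [List.map_cons, List.cons_append, List.cons.injEq, Option.some.injEq,
      Sigma.mk.injEq, heq_eq_eq, true_and] at hσ
    obtain ⟨rfl, rfl⟩ := hσ
    exact ⟨δ, rfl, rfl⟩

lemma Represents.eq_nil {β : List (StackSymbol C)} {γ : List (C j)}
    (h : Represents c₀ j (some ⟨j, none⟩, none :: β) γ) : γ = [] := by
  obtain ⟨co, δ, hco, hσ, rfl⟩ := h
  obtain rfl := hco.unique (.state j none)
  rcases δ with _ | ⟨d, δ⟩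
  · rfl
  · simp at hσ

lemma Represents.eq_of_nil {cfg : State C × List (StackSymbol C)}
    (h : Represents c₀ j cfg []) : cfg = (some ⟨j, none⟩, [none]) := by
  obtain ⟨q, σ⟩ := cfg
  obtain ⟨_ | c, _ | ⟨d, δ⟩, hq, rfl, hγ⟩ := h <;> simp at hγ
  cases hq
  rfl

lemma index_of_step {cfg cfg' : State C × List (StackSymbol C)}
    (h : (machine F c₀).Step cfg a cfg') :
    ∃ j, index cfg'.1 = some j ∧ ∀ i, index cfg.1 = some i → i = j := by
  rcases h with ⟨⟨hq, -, -⟩⟩ | ⟨⟨hq, -, -⟩ | ⟨-, -⟩⟩ | ⟨⟨-, -⟩⟩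
  · exact ⟨_, rfl, fun _ => hq.eq_of_index_eq⟩
  · exact ⟨_, rfl, fun _ => hq.eq_of_index_eq⟩
  · exact ⟨_, rfl, fun _ hi => (Option.some.inj hi).symm⟩
  · exact ⟨_, rfl, fun _ hi => (Option.some.inj hi).symm⟩

lemma index_of_scans {cfg cfg' : State C × List (StackSymbol C)} {w : List T}
    (h : (machine F c₀).Scans cfg w cfg') (hj : index cfg.1 = some j) :
    index cfg'.1 = some j := by
  induction h with
  | refl => exact hj
  | step hstep _ ih =>
      obtain ⟨i, hi, hsrc⟩ := index_of_step hstep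
      exact ih (hsrc j hj ▸ hi)

lemma eq_nil_of_scans_start {σ σ' : List (StackSymbol C)} {w : List T}
    (h : (machine F c₀).Scans (none, σ) w (none, σ')) : w = [] := by
  cases h with
  | refl => rfl
  | step hstep hscan =>
      obtain ⟨i, hi, -⟩ := index_of_step hstep
      cases index_of_scans hscan hi

lemma exists_step {cfg : State C × List (StackSymbol C)} {c : C j} {δ γ : List (C j)}
    (h : Represents c₀ j cfg (c :: δ)) (he : Expands (F j) c a γ) :
    ∃ cfg', (machine F c₀).Step cfg a cfg' ∧ Represents c₀ j cfg' (γ ++ δ) := by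
  obtain ⟨q, σ⟩ := cfg
  obtain ⟨_ | c', δ', hq, rfl, hγ⟩ := h <;>
    simp only [Option.toList_none, Option.toList_some, List.nil_append, List.cons_append,
      List.cons.injEq] at hγ
  · obtain ⟨rfl, rfl⟩ := hγ
    cases hq
    rcases he.tail_eq with htail | ⟨e, htail⟩
    · exact ⟨_, .pop (.top he htail), represents_expansion (by simp [htail])⟩
    · exact ⟨_, .repl (.top he htail), represents_expansion (by simp [htail])⟩
  · obtain ⟨rfl, rfl⟩ := hγ
    obtain ⟨x, β, hσ⟩ := List.exists_cons_of_ne_nil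
      (by simp : δ.map (stackCell j) ++ [(none : StackSymbol C)] ≠ [])
    rw [hσ]
    rcases he.tail_eq with htail | ⟨e, htail⟩
    · exact ⟨_, .repl (.cached hq he htail), represents_expansion (by simp [htail, hσ])⟩
    · exact ⟨_, .push (.cached hq he htail), represents_expansion (by simp [htail, hσ])⟩

lemma exists_expands_of_step {cfg cfg' : State C × List (StackSymbol C)} {γ₀ : List (C j)}
    (hstep : (machine F c₀).Step cfg a cfg') (h : Represents c₀ j cfg γ₀)
    (hj : index cfg'.1 = some j) :
    ∃ c δ γ, γ₀ = c :: δ ∧ Expands (F j) c a γ ∧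
      Represents c₀ j cfg' (γ ++ δ) := by
  cases hstep with
  | push htr =>
      cases htr with
      | @cached j' _ _ _ γ _ hq he htail =>
          obtain rfl : j' = j := Option.some.inj hj
          obtain ⟨δ, rfl, hσ⟩ := h.eq_cons_of_caches hq
          exact ⟨_, δ, _, rfl, he, represents_expansion (by simp [htail, hσ])⟩
  | repl htr =>
      cases htr with
      | @cached _ j' _ _ γ _ hq he htail =>
          obtain rfl : j' = j := Option.some.inj hj
          obtain ⟨δ, rfl, hσ⟩ := h.eq_cons_of_caches hq
          exact ⟨_, δ, _, rfl, he, represents_expansion (by simp [htail, hσ])⟩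
      | @top j' _ _ _ γ he htail =>
          obtain rfl : j' = j := Option.some.inj hj
          obtain ⟨δ, rfl, hσ⟩ := h.eq_cons_of_top
          exact ⟨_, δ, _, rfl, he, represents_expansion (by simp [htail, hσ])⟩
  | pop htr =>
      cases htr with
      | @top j' _ _ γ he htail =>
          obtain rfl : j' = j := Option.some.inj hj
          obtain ⟨δ, rfl, hσ⟩ := h.eq_cons_of_top
          exact ⟨_, δ, _, rfl, he, represents_expansion (by simp [htail, hσ])⟩

lemma mem_prod_of_scans {cfg : State C × List (StackSymbol C)} {w : List T}
    {β : List (StackSymbol C)} {γ : List (C j)}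
    (h : (machine F c₀).Scans cfg w (some ⟨j, none⟩, none :: β))
    (hrep : Represents c₀ j cfg γ) : w ∈ (γ.map (F j)).prod := by
  generalize hend : ((some ⟨j, none⟩, none :: β) : State C × List (StackSymbol C)) = cend at h
  induction h generalizing γ with
  | refl =>
      subst hend
      rw [hrep.eq_nil]
      exact Language.nil_mem_one
  | step hstep hscan ih =>
      obtain ⟨i, hi, -⟩ := index_of_step hstep
      obtain rfl : i = j := by simpa [← hend, index] using (index_of_scans hscan hi).symm
      obtain ⟨c, δ, γ', rfl, he, hrep'⟩ := exists_expands_of_step hstep hrep hi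
      exact he.cons_mem_prod (ih hrep' hend)

lemma scans_of_mem_prod (hF : IsGreibachFamily (F j)) {cfg : State C × List (StackSymbol C)}
    {γ : List (C j)} {w : List T} (hrep : Represents c₀ j cfg γ)
    (hw : w ∈ (γ.map (F j)).prod) :
    (machine F c₀).Scans cfg w (some ⟨j, none⟩, [none]) := by
  induction w generalizing cfg γ with
  | nil =>
      obtain rfl := hF.eq_nil_of_nil_mem_prod hw
      rw [hrep.eq_of_nil]
      exact .refl _
  | cons a w ih =>
      obtain ⟨c, δ, γ', rfl, he, hw'⟩ := hF.exists_expands_of_cons_mem_prod hw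
      obtain ⟨cfg', hstep, hrep'⟩ := exists_step hrep he
      exact .step hstep (ih hrep' hw')

theorem exists_scans_iff (hF : IsGreibachFamily (F j)) (w : List T) :
    (∃ β, (machine F c₀).Scans (none, [none]) w (some ⟨j, none⟩, none :: β)) ↔
      w ∈ F j (c₀ j) := by
  have hstart : ([c₀ j].map (F j)).prod = F j (c₀ j) := by simp
  refine ⟨fun ⟨β, h⟩ => hstart ▸ mem_prod_of_scans h (represents_start j), fun hw => ?_⟩
  exact ⟨[], scans_of_mem_prod hF (represents_start j) (hstart ▸ hw)⟩

def acceptStates (L : Fin k → Language T) (j : Fin k) : Set (State C) :=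
  {q | q = none ∧ [] ∈ L j ∨ q = some ⟨j, none⟩}

theorem mem_iff_exists_scans {L : Fin k → Language T} (hF : ∀ j, IsGreibachFamily (F j))
    (hc₀ : ∀ j w, w ∈ F j (c₀ j) ↔ w ∈ L j ∧ w ≠ []) (w : List T) (j : Fin k) :
    w ∈ L j ↔ ∃ r ∈ acceptStates L j, ∃ β,
      (machine F c₀).Scans (none, [none]) w (r, none :: β) := by
  constructor
  · intro hw
    rcases eq_or_ne w [] with rfl | hne
    · exact ⟨none, .inl ⟨rfl, hw⟩, [], .refl _⟩
    · obtain ⟨β, h⟩ := (exists_scans_iff (hF j) w).2 ((hc₀ j w).2 ⟨hw, hne⟩)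
      exact ⟨_, .inr rfl, β, h⟩
  · rintro ⟨r, ⟨rfl, hnil⟩ | rfl, β, h⟩
    · exact eq_nil_of_scans_start h ▸ hnil
    · exact ((hc₀ j w).1 ((exists_scans_iff (hF j) w).1 ⟨β, h⟩)).1

end GreibachPDA

/-- For any finite list of context-free languages `L₁, …, L_k` over a common alphabet `Σ`,
there are a single restricted PDA `P` over `Σ` and subsets `G₁, …, G_k` of its states such
that for every string `w` and every `j`: `w ∈ L_j` iff some run of `P` scanning `w` ends in
a state of `G_j` with `⊥` as the top stack symbol.  Consequently, `w ∈ L₁ ∩ ⋯ ∩ L_k` iff for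
every `j` some run of `P` scanning `w` ends in a state of `G_j` with `⊥` on top. -/
theorem exists_restrictedPDA_for_intersection {T : Type} (k : ℕ) (L : Fin k → Language T)
    (hL : ∀ j, (L j).IsContextFree) :
    ∃ (Q S : Type) (_ : Fintype Q) (_ : Fintype S) (M : RestrictedPDA Q T S)
      (G : Fin k → Set Q),
      (∀ (w : List T) (j : Fin k),
        w ∈ L j ↔ ∃ r ∈ G j, ∃ β : List S, M.Scans (M.start, [M.bot]) w (r, M.bot :: β)) ∧
      (∀ w : List T,
        (∀ j : Fin k, w ∈ L j) ↔
          ∀ j : Fin k, ∃ r ∈ G j, ∃ β : List S,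
            M.Scans (M.start, [M.bot]) w (r, M.bot :: β)) := by
  choose C _ F c₀ hF hc₀ using fun j => (hL j).exists_isGreibachFamily
  exact ⟨_, _, Fintype.ofFinite _, Fintype.ofFinite _, GreibachPDA.machine F c₀,
    GreibachPDA.acceptStates L, GreibachPDA.mem_iff_exists_scans hF hc₀,
    fun w => forall_congr' (GreibachPDA.mem_iff_exists_scans hF hc₀ w)⟩
end

section
/- The reading of the superposition stack equals a weighted sum over the runs of a one-state, one-stack-symbol nondeterministic stack: for every t ≥ 1, s_t[1] = Σ over all action sequences (a₁, …, a_t) ∈ {push, no-op, pop}^t of (∏_{k=1}^t w_k(a_k)) · top(a₁, …, a_t), where w_k(push) = u_k, w_k(no-op) = o_k, w_k(pop) = d_k, and top(a₁, …, a_t) ∈ ℝ^m is the top element of the stack of vectors obtained by executing the actions in order on an initially empty stack, where the action at step k either pushes the vector v_k, leaves the stack unchanged (no-op), or removes the top element if the stack is nonempty and otherwise leaves it empty (pop), and where the top of an empty stack is taken to be 0 ∈ ℝ^m. -/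
/-!
Read the stack left by a run of length `t` from the top, with the next input `v (t + 1)` placed
above it as entry `0`; then the weighted sum over runs of entry `i` satisfies the recursion of
`s_t[i]`. Splitting off the last action, a push shifts the entries down by one, a no-op keeps
them and a pop shifts them up, with weights `u`, `o`, `d`. Entry `0` matches `s_t[0] = v (t + 1)`
because the run weights sum to `1`, and entries beyond `t` vanish because a run of length `t`
leaves at most `t` vectors on the stack.
-/

/-- An action on the superposition stack: push, no-op, or pop. -/
inductive Act where
  | push
  | noop
  | pop
  deriving DecidableEq

instance : Fintype Act where
  elems := {Act.push, Act.noop, Act.pop}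
  complete := by intro x; cases x <;> simp

/-- The superposition stack of Joulin and Mikolov: `sup v u o d t i` is `s_t[i]`, where
`s_t[0] = v_{t+1}`, `s_0[i] = 0` for `i ≥ 1`, and for `t ≥ 1`,
`s_t[i] = u_t·s_{t-1}[i-1] + o_t·s_{t-1}[i] + d_t·s_{t-1}[i+1]` for `1 ≤ i ≤ t` and
`s_t[i] = 0` for `i > t`. -/
def sup {m : ℕ} (v : ℕ → Fin m → ℝ) (u o d : ℕ → ℝ) : ℕ → ℕ → Fin m → ℝ
  | t, 0 => v (t + 1)
  | 0, _ + 1 => 0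
  | t + 1, i + 1 =>
      if i + 1 ≤ t + 1 then
        u (t + 1) • sup v u o d t i + o (t + 1) • sup v u o d t (i + 1)
          + d (t + 1) • sup v u o d t (i + 2)
      else 0

/-- The weight of an action at timestep `k`: `u k` for push, `o k` for no-op, `d k` for
pop. -/
def actWeight (u o d : ℕ → ℝ) (k : ℕ) : Act → ℝ
  | .push => u k
  | .noop => o k
  | .pop => d k

/-- The weight `∏_{k} w_k(a_k)` of a sequence of actions whose first action happens at
timestep `k`. -/
def seqWeight (u o d : ℕ → ℝ) : ℕ → List Act → ℝ
  | _, [] => 1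
  | k, a :: rest => actWeight u o d k a * seqWeight u o d (k + 1) rest

/-- Execute a sequence of actions on a stack of vectors (head = top), where the action at
timestep `k` either pushes the vector `v k`, leaves the stack unchanged (no-op), or removes
the top element if the stack is nonempty and otherwise leaves it empty (pop). -/
def execStack {m : ℕ} (v : ℕ → Fin m → ℝ) : ℕ → List (Fin m → ℝ) → List Act → List (Fin m → ℝ)
  | _, st, [] => st
  | k, st, .push :: rest => execStack v (k + 1) (v k :: st) rest
  | k, st, .noop :: rest => execStack v (k + 1) st rest
  | k, st, .pop :: rest => execStack v (k + 1) st.tail rest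

/-- `top(a₁, …, a_t)`: the top element of the stack of vectors obtained by executing the
actions in order (at timesteps `1, …, t`) on an initially empty stack; the top of an empty
stack is taken to be `0`. -/
def stackTop {m : ℕ} (v : ℕ → Fin m → ℝ) (acts : List Act) : Fin m → ℝ :=
  (execStack v 1 [] acts).headD 0

theorem Act.sum_univ {M : Type*} [AddCommMonoid M] (f : Act → M) :
    ∑ b, f b = f .push + f .noop + f .pop := by
  rw [show (Finset.univ : Finset Act) = {.push, .noop, .pop} from rfl]
  simp [add_assoc]

theorem List.ofFn_snoc {α : Type*} {n : ℕ} (a : Fin n → α) (b : α) :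
    List.ofFn (Fin.snoc a b : Fin (n + 1) → α) = List.ofFn a ++ [b] := by
  rw [List.ofFn_succ']
  simp

theorem Fintype.sum_ofFn_succ {α M : Type*} [Fintype α] [AddCommMonoid M] (t : ℕ)
    (f : List α → M) :
    ∑ a : Fin (t + 1) → α, f (List.ofFn a) = ∑ a : Fin t → α, ∑ b, f (List.ofFn a ++ [b]) := by
  rw [← (Fin.snocEquiv fun _ => α).sum_comp, Fintype.sum_prod_type, Finset.sum_comm]
  simp only [Fin.snocEquiv, Equiv.coe_fn_mk, List.ofFn_snoc]

theorem seqWeight_append_singleton (u o d : ℕ → ℝ) (k : ℕ) (l : List Act) (b : Act) :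
    seqWeight u o d k (l ++ [b]) = seqWeight u o d k l * actWeight u o d (k + l.length) b := by
  induction l generalizing k with
  | nil => simp [seqWeight]
  | cons a l ih => simp [seqWeight, ih, add_assoc, add_comm 1, mul_assoc]

theorem execStack_append {m : ℕ} (v : ℕ → Fin m → ℝ) (k : ℕ) (st : List (Fin m → ℝ))
    (l l' : List Act) :
    execStack v k st (l ++ l') = execStack v (k + l.length) (execStack v k st l) l' := by
  induction l generalizing k st with
  | nil => rfl
  | cons a l ih =>
    cases a <;> simp [execStack, ih, add_assoc, add_comm 1]

theorem length_execStack_le {m : ℕ} (v : ℕ → Fin m → ℝ) (k : ℕ) (st : List (Fin m → ℝ))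
    (l : List Act) : (execStack v k st l).length ≤ st.length + l.length := by
  induction l generalizing k st with
  | nil => simp [execStack]
  | cons a l ih =>
    cases a <;> grind [execStack]

theorem sum_runs_succ {M : Type*} [AddCommMonoid M] [Module ℝ M] (u o d : ℕ → ℝ) (k t : ℕ)
    (F : List Act → M) :
    ∑ a : Fin (t + 1) → Act, seqWeight u o d k (List.ofFn a) • F (List.ofFn a) =
      ∑ a : Fin t → Act, seqWeight u o d k (List.ofFn a) •
        ∑ b, actWeight u o d (k + t) b • F (List.ofFn a ++ [b]) := by
  rw [Fintype.sum_ofFn_succ (f := fun l => seqWeight u o d k l • F l)]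
  simp only [seqWeight_append_singleton, List.length_ofFn, Finset.smul_sum, mul_smul]

theorem sum_seqWeight_eq_one (u o d : ℕ → ℝ) (k : ℕ)
    (hnorm : ∀ j, k ≤ j → u j + o j + d j = 1) (t : ℕ) :
    ∑ a : Fin t → Act, seqWeight u o d k (List.ofFn a) = 1 := by
  induction t with
  | zero => simp [seqWeight]
  | succ t ih =>
    have hstep := sum_runs_succ u o d k t (fun _ => (1 : ℝ))
    simp only [smul_eq_mul, mul_one] at hstep
    rw [hstep, Act.sum_univ]
    simp [actWeight, hnorm (k + t) (by omega), ih]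

theorem sum_actWeight_smul_getD_execStack {m : ℕ} (v : ℕ → Fin m → ℝ) (u o d : ℕ → ℝ)
    (k : ℕ) (st : List (Fin m → ℝ)) (x : Fin m → ℝ) (j : ℕ) :
    ∑ b, actWeight u o d k b • (x :: execStack v k st [b]).getD (j + 1) 0 =
      u k • (v k :: st).getD j 0 + o k • (v k :: st).getD (j + 1) 0
        + d k • (v k :: st).getD (j + 2) 0 := by
  rw [Act.sum_univ]
  cases st <;> simp [execStack, actWeight]

theorem sup_eq_sum_runs {m : ℕ} (v : ℕ → Fin m → ℝ) (u o d : ℕ → ℝ)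
    (hnorm : ∀ k, 1 ≤ k → u k + o k + d k = 1) (t i : ℕ) :
    sup v u o d t i = ∑ a : Fin t → Act, seqWeight u o d 1 (List.ofFn a) •
      (v (t + 1) :: execStack v 1 [] (List.ofFn a)).getD i 0 := by
  induction t generalizing i with
  | zero => cases i <;> simp [sup, seqWeight, execStack]
  | succ t ih =>
    rcases i with _ | j
    · simp only [List.getD_cons_zero, ← Finset.sum_smul, sum_seqWeight_eq_one u o d 1 hnorm,
        one_smul]
      rfl
    by_cases hj : j ≤ t
    · rw [sup, if_pos (by omega), ih, ih, ih,
        sum_runs_succ (F := fun l => (v (t + 2) :: execStack v 1 [] l).getD (j + 1) 0)]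
      simp only [execStack_append, List.length_ofFn, add_comm 1 t,
        sum_actWeight_smul_getD_execStack, smul_add, Finset.smul_sum, Finset.sum_add_distrib,
        smul_comm (u _), smul_comm (o _), smul_comm (d _)]
    · rw [sup, if_neg (by omega)]
      refine (Finset.sum_eq_zero fun a _ => ?_).symm
      have hlen := length_execStack_le v 1 [] (List.ofFn a)
      rw [List.length_nil, List.length_ofFn, zero_add] at hlen
      rw [List.getD_cons_succ, List.getD_eq_default _ _ (by omega), smul_zero]

theorem superposition_reading_eq_sum_over_runs_general {m : ℕ}
    (v : ℕ → Fin m → ℝ) (u o d : ℕ → ℝ) (hnorm : ∀ k, 1 ≤ k → u k + o k + d k = 1)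
    (t : ℕ) :
    sup v u o d t 1 =
      ∑ a : Fin t → Act,
        seqWeight u o d 1 (List.ofFn a) • stackTop v (List.ofFn a) := by
  rw [sup_eq_sum_runs v u o d hnorm]
  refine Finset.sum_congr rfl fun a _ => ?_
  rw [List.getD_cons_succ, stackTop]
  cases execStack v 1 [] (List.ofFn a) <;> rfl

/-- **The reading of the superposition stack is a weighted sum over the runs of a one-state,
one-stack-symbol nondeterministic stack**: if `u_t + o_t + d_t = 1` for all `t ≥ 1`, then
for every `t ≥ 1`,
`s_t[1] = Σ_{(a₁,…,a_t) ∈ {push, no-op, pop}^t} (∏_{k=1}^t w_k(a_k)) · top(a₁, …, a_t)`. -/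
theorem superposition_reading_eq_sum_over_runs {m : ℕ} (hm : 1 ≤ m)
    (v : ℕ → Fin m → ℝ) (u o d : ℕ → ℝ) (hnorm : ∀ k, 1 ≤ k → u k + o k + d k = 1)
    (t : ℕ) (ht : 1 ≤ t) :
    sup v u o d t 1 =
      ∑ a : Fin t → Act,
        seqWeight u o d 1 (List.ofFn a) • stackTop v (List.ofFn a) :=
  superposition_reading_eq_sum_over_runs_general v u o d hnorm t
end
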